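/- Suppose the weight functions wt and w̃t from ℤ×ℕ to a field satisfy wt(p)·(w̃t(p) − 1) = c for all p ∈ ℤ×ℕ, for some constant c, and w̃t(p) ≠ 0 for all p. Let A ∈ Dyck_{2n} and B ∈ Dyck_{2n+8} be fixed Dyck paths with A < B. Then Σ over D ∈ Dyck_{2n+4} with A ≤ D < B of wt_V(D) · Π_{p∈A∩D} (1 − 1/w̃t(p)) equals Σ over D ∈ Dyck_{2n+4} with A < D ≤ B of wt_HP(D) · Π_{p∈D∩B} (1 − 1/w̃t(p)). -/

import Mathlib

open Finset

attribute [local instance 10] Classical.propDecidable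

noncomputable section

namespace Paper

/-! ### Words and permutation statistics (all words are 1-based). -/

/-- The word (one-line notation, 1-based) of a permutation of `{1, …, N}`:
`word π i = π(i)` for `1 ≤ i ≤ N`, and `0` otherwise. -/
def word {N : ℕ} (π : Equiv.Perm (Fin N)) (i : ℕ) : ℕ :=
  if h : 1 ≤ i ∧ i ≤ N then (π ⟨i - 1, by omega⟩ : ℕ) + 1 else 0

/-- The major index of a word of length `N`: the sum of the descents. -/
def majW (N : ℕ) (w : ℕ → ℕ) : ℕ :=
  ∑ i ∈ Finset.Icc 1 (N - 1), if w (i + 1) < w i then i else 0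

/-- The number of inversions of a word of length `N`. -/
def invW (N : ℕ) (w : ℕ → ℕ) : ℕ :=
  (((Finset.Icc 1 N) ×ˢ (Finset.Icc 1 N)).filter
    fun p => p.1 < p.2 ∧ w p.2 < w p.1).card

/-- The number of descents of a word of length `m`. -/
def desW (m : ℕ) (w : ℕ → ℕ) : ℕ :=
  ((Finset.Icc 1 (m - 1)).filter fun i => w (i + 1) < w i).card

/-- The number of ascents of a word of length `m`. -/
def ascW (m : ℕ) (w : ℕ → ℕ) : ℕ :=
  ((Finset.Icc 1 (m - 1)).filter fun i => w i < w (i + 1)).card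

/-- The number of non-descents of a word of length `m`. -/
def ndesW (m : ℕ) (w : ℕ → ℕ) : ℕ :=
  ((Finset.Icc 1 m).filter fun i => i = m ∨ w i < w (i + 1)).card

/-- The number of non-ascents of a word of length `m`. -/
def nascW (m : ℕ) (w : ℕ → ℕ) : ℕ :=
  ((Finset.Icc 1 m).filter fun i => i = m ∨ ¬ w i < w (i + 1)).card

/-- `π_e = π₂π₄⋯`, the subword of even-position entries, as a 1-based word. -/
def evenWord {N : ℕ} (π : Equiv.Perm (Fin N)) (j : ℕ) : ℕ := word π (2 * j)

/-- `π_o = π₁π₃⋯`, the subword of odd-position entries, as a 1-based word. -/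
def oddWord {N : ℕ} (π : Equiv.Perm (Fin N)) (j : ℕ) : ℕ := word π (2 * j - 1)

/-- A word of length `N` is alternating: `w₁ < w₂ > w₃ < w₄ > ⋯`. -/
def IsAltW (N : ℕ) (w : ℕ → ℕ) : Prop :=
  ∀ i ∈ Finset.Icc 1 (N - 1), (i % 2 = 1 → w i < w (i + 1)) ∧ (i % 2 = 0 → w (i + 1) < w i)

/-- A word of length `N` is reverse alternating: `w₁ > w₂ < w₃ > w₄ < ⋯`. -/
def IsRaltW (N : ℕ) (w : ℕ → ℕ) : Prop :=
  ∀ i ∈ Finset.Icc 1 (N - 1), (i % 2 = 1 → w (i + 1) < w i) ∧ (i % 2 = 0 → w i < w (i + 1))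

/-- `Alt_N`, the set of alternating permutations of `{1, …, N}`. -/
def altPerms (N : ℕ) : Finset (Equiv.Perm (Fin N)) :=
  Finset.univ.filter fun π => IsAltW N (word π)

/-- `Ralt_N`, the set of reverse alternating permutations of `{1, …, N}`. -/
def raltPerms (N : ℕ) : Finset (Equiv.Perm (Fin N)) :=
  Finset.univ.filter fun π => IsRaltW N (word π)

/-- `κ_N = (1)(2,3)(4,5)⋯`, acting on the 1-based values `{1, …, N}`. -/
def kappaNat (N j : ℕ) : ℕ :=
  if j % 2 = 0 ∧ 2 ≤ j ∧ j + 1 ≤ N then j + 1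
  else if j % 2 = 1 ∧ 3 ≤ j ∧ j ≤ N then j - 1
  else j

/-- `η_N = (1,2)(3,4)⋯`, acting on the 1-based values `{1, …, N}`. -/
def etaNat (N j : ℕ) : ℕ :=
  if j % 2 = 1 ∧ j + 1 ≤ N then j + 1
  else if j % 2 = 0 ∧ 2 ≤ j ∧ j ≤ N then j - 1
  else j

/-- `maj(π⁻¹)`. -/
def majInv (N : ℕ) (π : Equiv.Perm (Fin N)) : ℕ := majW N (word π.symm)

/-- `maj(κ_N π⁻¹)`. -/
def majKappaInv (N : ℕ) (π : Equiv.Perm (Fin N)) : ℕ :=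
  majW N fun i => kappaNat N (word π.symm i)

/-- `maj(η_N π⁻¹)`. -/
def majEtaInv (N : ℕ) (π : Equiv.Perm (Fin N)) : ℕ :=
  majW N fun i => etaNat N (word π.symm i)

/-- The reversal permutation `i ↦ N + 1 - i` of `Fin N`. -/
def revPerm (N : ℕ) : Equiv.Perm (Fin N) :=
  ⟨Fin.rev, Fin.rev, fun i => Fin.rev_rev i, fun i => Fin.rev_rev i⟩

/-- `φ(π)ᵢ = (N+1) - π_{N+1-i}`. -/
def phiMap {N : ℕ} (π : Equiv.Perm (Fin N)) : Equiv.Perm (Fin N) :=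
  ((revPerm N).trans π).trans (revPerm N)

/-! ### Lattice paths.

A path with `L` unit steps is encoded by `s : Fin L → Bool` (`true` = up-step `(1,1)`,
`false` = down-step `(1,-1)`). -/

/-- The vertical displacement of the `j`-th step. -/
def stepVal {L : ℕ} (s : Fin L → Bool) (j : ℕ) : ℤ :=
  if h : j < L then (if s ⟨j, h⟩ then 1 else -1) else 0

/-- The height of the path after `i` steps. -/
def pht {L : ℕ} (s : Fin L → Bool) (i : ℕ) : ℤ := ∑ j ∈ Finset.range i, stepVal s j

/-- A Dyck path: stays (weakly) above the `x`-axis and ends at height `0`. -/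
def IsDyck {L : ℕ} (s : Fin L → Bool) : Prop :=
  (∀ i ∈ Finset.range (L + 1), 0 ≤ pht s i) ∧ pht s L = 0

/-- The Dyck paths with `L` steps. -/
def dyckPaths (L : ℕ) : Finset (Fin L → Bool) := Finset.univ.filter fun s => IsDyck s

/-- The (indices of the) valleys of a path: a down-step followed by an up-step. -/
def valleys {L : ℕ} (s : Fin L → Bool) : Finset ℕ :=
  (Finset.Icc 1 (L - 1)).filter fun i => stepVal s (i - 1) = -1 ∧ stepVal s i = 1

/-- The (indices of the) peaks of a path: an up-step followed by a down-step. -/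
def peaks {L : ℕ} (s : Fin L → Bool) : Finset ℕ :=
  (Finset.Icc 1 (L - 1)).filter fun i => stepVal s (i - 1) = 1 ∧ stepVal s i = -1

/-- The (indices of the) high peaks of a path: peaks of height at least `2`. -/
def highPeaks {L : ℕ} (s : Fin L → Bool) : Finset ℕ :=
  (peaks s).filter fun i => 2 ≤ pht s i

/-- The height over abscissa `x` of a path starting at `(-m, 0)`. -/
def aht (m : ℕ) {L : ℕ} (s : Fin L → Bool) (x : ℤ) : ℤ := pht s (x + m).toNat

/-- `D₁ < D₂`, for `D₁` starting at `(-m₁,0)` and `D₂` at `(-m₂,0)`, `m₁ ≤ m₂`: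
strictly below on the common range of abscissas. -/
def PathLT (m₁ m₂ : ℕ) {L₁ L₂ : ℕ} (s₁ : Fin L₁ → Bool) (s₂ : Fin L₂ → Bool) : Prop :=
  ∀ x ∈ Finset.Icc (-(m₁ : ℤ)) (m₁ : ℤ), aht m₁ s₁ x < aht m₂ s₂ x

/-- `D₁ ≤ D₂`: weakly below, sharing no step. -/
def PathLE (m₁ m₂ : ℕ) {L₁ L₂ : ℕ} (s₁ : Fin L₁ → Bool) (s₂ : Fin L₂ → Bool) : Prop :=
  (∀ x ∈ Finset.Icc (-(m₁ : ℤ)) (m₁ : ℤ), aht m₁ s₁ x ≤ aht m₂ s₂ x) ∧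
    ∀ x ∈ Finset.Icc (-(m₁ : ℤ)) ((m₁ : ℤ) - 1),
      ¬(aht m₁ s₁ x = aht m₂ s₂ x ∧ aht m₁ s₁ (x + 1) = aht m₂ s₂ (x + 1))

/-- The abscissas of the common lattice points of two paths. -/
def interPts (m₁ m₂ : ℕ) {L₁ L₂ : ℕ} (s₁ : Fin L₁ → Bool) (s₂ : Fin L₂ → Bool) : Finset ℤ :=
  (Finset.Icc (-(m₁ : ℤ)) (m₁ : ℤ)).filter fun x => aht m₁ s₁ x = aht m₂ s₂ x

/-- `Dyck^k_{2n}`: tuples `(D₁, …, D_k)` with `D_i ∈ Dyck((-n-2i+2,0) → (n+2i-2,0))`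
(0-based: `D_i` has half-length `n + 2i`). -/
abbrev DyckTuple (n k : ℕ) := ∀ i : Fin k, Fin (2 * (n + 2 * (i : ℕ))) → Bool

/-- The tuples `(D₁ ≤ D₂ ≤ ⋯ ≤ D_k) ∈ Dyck^k_{2n}`. -/
def weakTuples (n k : ℕ) : Finset (DyckTuple n k) :=
  Finset.univ.filter fun D =>
    (∀ i : Fin k, IsDyck (D i)) ∧
      ∀ (i : ℕ) (h : i + 1 < k),
        PathLE (n + 2 * i) (n + 2 * (i + 1)) (D ⟨i, by omega⟩) (D ⟨i + 1, h⟩)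

/-- The tuples `(D₁ < D₂ < ⋯ < D_k) ∈ Dyck^k_{2n}`. -/
def strictTuples (n k : ℕ) : Finset (DyckTuple n k) :=
  Finset.univ.filter fun D =>
    (∀ i : Fin k, IsDyck (D i)) ∧
      ∀ (i : ℕ) (h : i + 1 < k),
        PathLT (n + 2 * i) (n + 2 * (i + 1)) (D ⟨i, by omega⟩) (D ⟨i + 1, h⟩)

/-- The lattice points of a path starting at `(-m, 0)`, as a finite subset of `ℤ × ℤ`. -/
def pathPoints (m : ℕ) {L : ℕ} (s : Fin L → Bool) : Finset (ℤ × ℤ) :=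
  (Finset.range (L + 1)).image fun t : ℕ => (-(m : ℤ) + (t : ℤ), pht s t)

/-- The non-valley lattice points of a path starting at `(-m, 0)`. -/
def nonValleyPoints (m : ℕ) {L : ℕ} (s : Fin L → Bool) : Finset (ℤ × ℤ) :=
  ((Finset.range (L + 1)).filter fun t => t ∉ valleys s).image
    fun t : ℕ => (-(m : ℤ) + (t : ℤ), pht s t)

section Weights

variable {F : Type*} [Field F]

/-- The `i`-th lattice point (in `ℤ × ℕ`) of a path starting at `(a, 0)`. -/
def ptOf (a : ℤ) {L : ℕ} (s : Fin L → Bool) (i : ℕ) : ℤ × ℕ := (a + i, (pht s i).toNat)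

/-- `wt_V(D) = ∏_{p ∈ D} wt(p) · ∏_{p ∈ V(D)} w̃t(p)` for a path starting at `(a, 0)`. -/
def wtVal (wt wte : ℤ × ℕ → F) (a : ℤ) {L : ℕ} (s : Fin L → Bool) : F :=
  (∏ i ∈ Finset.range (L + 1), wt (ptOf a s i)) * ∏ i ∈ valleys s, wte (ptOf a s i)

/-- `wt_HP(D) = ∏_{p ∈ D} wt(p) · ∏_{p ∈ HP(D)} w̃t(p)` for a path starting at `(a, 0)`. -/
def wtHigh (wt wte : ℤ × ℕ → F) (a : ℤ) {L : ℕ} (s : Fin L → Bool) : F :=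
  (∏ i ∈ Finset.range (L + 1), wt (ptOf a s i)) * ∏ i ∈ highPeaks s, wte (ptOf a s i)

/-- `∏_{p ∈ D₁ ∩ D₂} f(p)`, for `D₁` starting at `(-m₁,0)` and `D₂` at `(-m₂,0)`. -/
def interProd (f : ℤ × ℕ → F) (m₁ m₂ : ℕ) {L₁ L₂ : ℕ}
    (s₁ : Fin L₁ → Bool) (s₂ : Fin L₂ → Bool) : F :=
  ∏ x ∈ interPts m₁ m₂ s₁ s₂, f (x, (aht m₁ s₁ x).toNat)

/-- The sum over `(D₁ ≤ ⋯ ≤ D_k) ∈ Dyck^k_{2n}` of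
`wt_V(D₁)⋯wt_V(D_k) ∏_{i=1}^{k-1} ∏_{p ∈ D_i ∩ D_{i+1}} (1 - w̃t(p)⁻¹)`. -/
def weakSum (wt wte : ℤ × ℕ → F) (n k : ℕ) : F :=
  ∑ D ∈ weakTuples n k,
    (∏ i : Fin k, wtVal wt wte (-(n : ℤ) - 2 * (i : ℕ)) (D i)) *
      ∏ j : Fin (k - 1),
        interProd (fun p => 1 - (wte p)⁻¹) (n + 2 * (j : ℕ)) (n + 2 * ((j : ℕ) + 1))
          (D ⟨(j : ℕ), by have := j.isLt; omega⟩)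
          (D ⟨(j : ℕ) + 1, by have := j.isLt; omega⟩)

/-- The sum over `(D₁ < ⋯ < D_k) ∈ Dyck^k_{2n}` of `wt_V(D₁)⋯wt_V(D_k)`. -/
def strictSum (wt wte : ℤ × ℕ → F) (n k : ℕ) : F :=
  ∑ D ∈ strictTuples n k, ∏ i : Fin k, wtVal wt wte (-(n : ℤ) - 2 * (i : ℕ)) (D i)

end Weights

/-! ### Schröder paths.

A path with `L` steps is encoded by `st : Fin L → Fin 3`
(`0` = up-step `(1,1)`, `1` = down-step `(1,-1)`, `2` = horizontal step `(2,0)`). -/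

/-- The horizontal displacement of the `j`-th step. -/
def stepX {L : ℕ} (st : Fin L → Fin 3) (j : ℕ) : ℕ :=
  if h : j < L then (if st ⟨j, h⟩ = 2 then 2 else 1) else 0

/-- The vertical displacement of the `j`-th step. -/
def stepY {L : ℕ} (st : Fin L → Fin 3) (j : ℕ) : ℤ :=
  if h : j < L then (if st ⟨j, h⟩ = 0 then 1 else if st ⟨j, h⟩ = 1 then -1 else 0) else 0

/-- The horizontal position (relative to the start) after `j` steps. -/
def xpos {L : ℕ} (st : Fin L → Fin 3) (j : ℕ) : ℕ := ∑ t ∈ Finset.range j, stepX st t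

/-- The height after `j` steps. -/
def ypos {L : ℕ} (st : Fin L → Fin 3) (j : ℕ) : ℤ := ∑ t ∈ Finset.range j, stepY st t

/-- A (little) Schröder path of horizontal span `2m`: nonnegative heights, ends at
height `0`, and no horizontal step on the `x`-axis. -/
def IsSch (m : ℕ) {L : ℕ} (st : Fin L → Fin 3) : Prop :=
  xpos st L = 2 * m ∧ (∀ j ∈ Finset.range (L + 1), 0 ≤ ypos st j) ∧ ypos st L = 0 ∧
    ∀ j ∈ Finset.range L, stepX st j = 2 → ypos st j ≠ 0

/-- The height of a Schröder path over the relative abscissa `x` (midpoints of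
horizontal steps get the height of that horizontal step). -/
def schHeight {L : ℕ} (st : Fin L → Fin 3) (x : ℕ) : ℤ :=
  ∑ t ∈ Finset.range L, if xpos st (t + 1) ≤ x then stepY st t else 0

/-- The relative abscissa `x` is the midpoint of a horizontal step. -/
def IsHMid {L : ℕ} (st : Fin L → Fin 3) (x : ℕ) : Prop :=
  ∃ j ∈ Finset.range L, stepX st j = 2 ∧ xpos st j + 1 = x

/-- The number of horizontal steps of a Schröder path. -/
def hsCount {L : ℕ} (st : Fin L → Fin 3) : ℕ :=
  ((Finset.range L).filter fun j => stepX st j = 2).card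

/-- `wt_Sch(c, S) = c^{hs(S)} ∏_{p ∈ S} wt(p)` for a Schröder path starting at `(a,0)`. -/
def wtSch {F : Type*} [Field F] (wt : ℤ × ℕ → F) (c : F) (a : ℤ) {L : ℕ}
    (st : Fin L → Fin 3) : F :=
  c ^ hsCount st * ∏ j ∈ Finset.range (L + 1), wt (a + xpos st j, (ypos st j).toNat)

/-- `φ_V(S) = D`: the Dyck path `D` (with `L'` steps) is obtained from the Schröder
path `S` by replacing each horizontal step by a down-step followed by an up-step. -/
def PhiVEq {L L' : ℕ} (st : Fin L → Fin 3) (s : Fin L' → Bool) : Prop :=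
  ∀ x ∈ Finset.range (L' + 1),
    pht s x = schHeight st x - (if IsHMid st x then 1 else 0)

/-- `φ_HP(S) = D`: the Dyck path `D` is obtained from the Schröder path `S` by
replacing each horizontal step by an up-step followed by a down-step. -/
def PhiHPEq {L L' : ℕ} (st : Fin L → Fin 3) (s : Fin L' → Bool) : Prop :=
  ∀ x ∈ Finset.range (L' + 1),
    pht s x = schHeight st x + (if IsHMid st x then 1 else 0)

/-! ### Young diagrams, excited and pleasant diagrams, reverse plane partitions. -/

/-- The cells (1-based, matrix coordinates) of the staircase `δ_m = (m-1, m-2, …, 1)`. -/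
def deltaCells (m : ℕ) : Finset (ℕ × ℕ) :=
  ((Finset.Icc 1 m) ×ˢ (Finset.Icc 1 m)).filter fun c => c.1 + c.2 ≤ m

/-- An excited move inside the Young diagram `lam`. -/
def ExcitedStep (lam : Finset (ℕ × ℕ)) (D D' : Finset (ℕ × ℕ)) : Prop :=
  ∃ i j : ℕ, (i, j) ∈ D ∧ (i + 1, j) ∉ D ∧ (i, j + 1) ∉ D ∧ (i + 1, j + 1) ∉ D ∧
    (i + 1, j + 1) ∈ lam ∧ D' = insert (i + 1, j + 1) (D.erase (i, j))

/-- `D` is an excited diagram of `lam/mu`. -/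
def IsExcited (lam mu D : Finset (ℕ × ℕ)) : Prop :=
  Relation.ReflTransGen (ExcitedStep lam) mu D

/-- `P` is a pleasant diagram of `lam/mu`: a subset of `lam \ D` for an excited diagram `D`. -/
def IsPleasant (lam mu : Finset (ℕ × ℕ)) (P : Finset (ℕ × ℕ)) : Prop :=
  ∃ D, IsExcited lam mu D ∧ P ⊆ lam \ D

/-- `p(lam/mu)`, the number of pleasant diagrams of `lam/mu`. -/
def pleasantCount (lam mu : Finset (ℕ × ℕ)) : ℕ :=
  Set.ncard {P : Finset (ℕ × ℕ) | IsPleasant lam mu P}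

/-- A reverse plane partition on the skew shape `shape`: a filling by nonnegative
integers (vanishing off the shape) weakly increasing along rows and columns. -/
def IsRPP (shape : Finset (ℕ × ℕ)) (f : ℕ × ℕ → ℕ) : Prop :=
  (∀ c, c ∉ shape → f c = 0) ∧
    (∀ i j : ℕ, (i, j) ∈ shape → (i, j + 1) ∈ shape → f (i, j) ≤ f (i, j + 1)) ∧
    ∀ i j : ℕ, (i, j) ∈ shape → (i + 1, j) ∈ shape → f (i, j) ≤ f (i + 1, j)

/-- `∑_{π ∈ RPP(shape)} q^{|π|}` as a formal power series in `q`. -/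
def rppGF (shape : Finset (ℕ × ℕ)) : PowerSeries ℚ :=
  PowerSeries.mk fun N =>
    (Set.ncard {f : ℕ × ℕ → ℕ | IsRPP shape f ∧ ∑ c ∈ shape, f c = N} : ℚ)

/-- `(q; q)_m = ∏_{i=1}^m (1 - q^i)` as a formal power series. -/
def pochPS (m : ℕ) : PowerSeries ℚ :=
  ∏ i ∈ Finset.Icc 1 m, (1 - (PowerSeries.X : PowerSeries ℚ) ^ i)

/-- `E*_N(q) = ∑_{π ∈ Alt_N} q^{maj(κ_N π⁻¹)}` as a formal power series. -/
def EstarPS (N : ℕ) : PowerSeries ℚ :=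
  ∑ π ∈ altPerms N, (PowerSeries.X : PowerSeries ℚ) ^ majKappaInv N π

/-- `E*_m(q)/(q;q)_m` for `m ≥ 0`, and `0` for `m < 0`. -/
def EstarEntry (m : ℤ) : PowerSeries ℚ :=
  if m < 0 then 0 else EstarPS m.toNat * (pochPS m.toNat)⁻¹

/-- The Gaussian binomial coefficient `[N choose M]_q` as a formal power series. -/
def gaussPS (N M : ℕ) : PowerSeries ℚ :=
  pochPS N * (pochPS M * pochPS (N - M))⁻¹

/-! Write `D` for a path between `A` and `B`. Since `wt·w̃t = c + wt` and
`wt·w̃t·(1 - w̃t⁻¹) = c`, every summand on either side expands into a sum of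
`c^|W| ∏_{p ∉ W} wt(p)` over the sets `W` of valleys (left) or high peaks (right) of `D` that
contain all contacts of `D` with `A` (left) or with `B` (right); neighbouring paths share no
step, so these contacts are indeed valleys, resp. high peaks, of `D`. Turning the valleys in `W`
into peaks raises `D` by `2` exactly at `W`: this lifts `D` off `A` and, by parity, keeps it
weakly below `B`, touching `B` only inside `W`. Lowering the peaks in `W` again is the inverse, and both maps keep
every lattice point outside `W`, hence the weight. -/

section Paths

variable {L : ℕ} (s : Fin L → Bool)

lemma stepVal_of_lt {j : ℕ} (h : j < L) : stepVal s j = if s ⟨j, h⟩ then 1 else -1 := by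
  simp [stepVal, h]

lemma stepVal_eq_one_or_neg_one {j : ℕ} (h : j < L) : stepVal s j = 1 ∨ stepVal s j = -1 := by
  rw [stepVal_of_lt s h]
  split <;> simp

@[simp] lemma pht_zero : pht s 0 = 0 := by simp [pht]

lemma pht_succ (i : ℕ) : pht s (i + 1) = pht s i + stepVal s i := by
  simp [pht, Finset.sum_range_succ]

lemma pht_add_mod_two {i : ℕ} (hi : i ≤ L) : (pht s i + i) % 2 = 0 := by
  induction i with
  | zero => simp
  | succ i ih =>
    have := ih (by omega)
    rw [pht_succ]
    rcases stepVal_eq_one_or_neg_one s (j := i) (by omega) with h | h <;> omega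

lemma isDyck_iff : IsDyck s ↔ (∀ i ≤ L, 0 ≤ pht s i) ∧ pht s L = 0 := by
  simp [IsDyck]

variable {s}

lemma mem_valleys {i : ℕ} :
    i ∈ valleys s ↔ (1 ≤ i ∧ i ≤ L - 1) ∧ stepVal s (i - 1) = -1 ∧ stepVal s i = 1 := by
  simp [valleys]

lemma mem_peaks {i : ℕ} :
    i ∈ peaks s ↔ (1 ≤ i ∧ i ≤ L - 1) ∧ stepVal s (i - 1) = 1 ∧ stepVal s i = -1 := by
  simp [peaks]

lemma mem_highPeaks {i : ℕ} : i ∈ highPeaks s ↔ i ∈ peaks s ∧ 2 ≤ pht s i := by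
  simp [highPeaks]

lemma stepVal_eq_one_of_pht_eq_zero (hs : ∀ i ≤ L, 0 ≤ pht s i) {i : ℕ} (hi : i < L)
    (h0 : pht s i = 0) : stepVal s i = 1 := by
  have := hs (i + 1) hi
  rw [pht_succ] at this
  rcases stepVal_eq_one_or_neg_one s hi with h | h <;> omega

lemma stepVal_pred_eq_neg_one_of_pht_eq_zero (hs : ∀ i ≤ L, 0 ≤ pht s i) {i : ℕ}
    (hi₀ : 1 ≤ i) (hi : i ≤ L) (h0 : pht s i = 0) : stepVal s (i - 1) = -1 := by
  obtain ⟨j, rfl⟩ : ∃ j, i = j + 1 := ⟨i - 1, by omega⟩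
  have := hs j (by omega)
  have := pht_succ s j
  rw [Nat.add_sub_cancel]
  rcases stepVal_eq_one_or_neg_one s (j := j) (by omega) with h | h <;> omega

end Paths

section Comparison

variable {L₁ L₂ : ℕ}

/-- Index form of `PathLT`: the `i`-th point of `s₁` is compared with the `(i + k)`-th point of
`s₂`, which starts `k` units further left. `ShiftLE` and `contacts` are the index forms of
`PathLE` and `interPts`. -/
def ShiftLT (k : ℕ) (s₁ : Fin L₁ → Bool) (s₂ : Fin L₂ → Bool) : Prop :=
  ∀ i ≤ L₁, pht s₁ i < pht s₂ (i + k)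

def ShiftLE (k : ℕ) (s₁ : Fin L₁ → Bool) (s₂ : Fin L₂ → Bool) : Prop :=
  (∀ i ≤ L₁, pht s₁ i ≤ pht s₂ (i + k)) ∧
    ∀ i < L₁, ¬(pht s₁ i = pht s₂ (i + k) ∧ pht s₁ (i + 1) = pht s₂ (i + 1 + k))

def contacts (k : ℕ) (s₁ : Fin L₁ → Bool) (s₂ : Fin L₂ → Bool) : Finset ℕ :=
  (Finset.range (L₁ + 1)).filter fun i => pht s₁ i = pht s₂ (i + k)

lemma forall_mem_Icc_neg_iff {m : ℕ} {r : ℤ} {p : ℤ → Prop} :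
    (∀ x ∈ Finset.Icc (-(m : ℤ)) r, p x) ↔ ∀ i : ℕ, (i : ℤ) ≤ r + m → p (i - m) := by
  refine ⟨fun h i hi => h _ (by simp; omega), fun h x hx => ?_⟩
  rw [Finset.mem_Icc] at hx
  have := h (x + m).toNat (by omega)
  rwa [show ((x + m).toNat : ℤ) - m = x by omega] at this

lemma aht_of_add_eq (m : ℕ) {L : ℕ} (s : Fin L → Bool) {x : ℤ} {i : ℕ} (h : x + m = i) :
    aht m s x = pht s i := by
  simp [aht, h]

lemma pathLT_iff_shiftLT (m k : ℕ) (s₁ : Fin (2 * m) → Bool) (s₂ : Fin L₂ → Bool) :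
    PathLT m (m + k) s₁ s₂ ↔ ShiftLT k s₁ s₂ := by
  rw [PathLT, forall_mem_Icc_neg_iff]
  refine forall_congr' fun i => ?_
  rw [aht_of_add_eq m s₁ (i := i) (by ring),
    aht_of_add_eq (m + k) s₂ (i := i + k) (by push_cast; ring)]
  exact imp_congr_left (by omega)

lemma pathLE_iff_shiftLE (m k : ℕ) (s₁ : Fin (2 * m) → Bool) (s₂ : Fin L₂ → Bool) :
    PathLE m (m + k) s₁ s₂ ↔ ShiftLE k s₁ s₂ := by
  rw [PathLE, ShiftLE, forall_mem_Icc_neg_iff, forall_mem_Icc_neg_iff]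
  refine and_congr (forall_congr' fun i => ?_) (forall_congr' fun i => ?_)
  · rw [aht_of_add_eq m s₁ (i := i) (by ring),
      aht_of_add_eq (m + k) s₂ (i := i + k) (by push_cast; ring)]
    exact imp_congr_left (by omega)
  · rw [aht_of_add_eq m s₁ (i := i) (by ring),
      aht_of_add_eq (m + k) s₂ (i := i + k) (by push_cast; ring),
      aht_of_add_eq m s₁ (i := i + 1) (by push_cast; ring),
      aht_of_add_eq (m + k) s₂ (i := i + 1 + k) (by push_cast; ring)]
    exact imp_congr_left (by omega)

lemma interProd_eq_prod_contacts {F : Type*} [Field F] (f : ℤ × ℕ → F) (m k : ℕ)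
    (s₁ : Fin (2 * m) → Bool) (s₂ : Fin L₂ → Bool) :
    interProd f m (m + k) s₁ s₂ = ∏ i ∈ contacts k s₁ s₂, f (ptOf (-m) s₁ i) := by
  refine Finset.prod_nbij' (fun x => (x + m).toNat) (fun i => (i : ℤ) - m) ?_ ?_ ?_ ?_ ?_
  · intro x hx
    simp only [interPts, contacts, Finset.mem_filter, Finset.mem_Icc, Finset.mem_range] at hx ⊢
    rw [aht_of_add_eq m s₁ (i := (x + m).toNat) (by omega),
      aht_of_add_eq (m + k) s₂ (i := (x + m).toNat + k) (by push_cast; omega)] at hx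
    exact ⟨by omega, hx.2⟩
  · intro i hi
    simp only [interPts, contacts, Finset.mem_filter, Finset.mem_Icc, Finset.mem_range] at hi ⊢
    rw [aht_of_add_eq m s₁ (i := i) (by ring),
      aht_of_add_eq (m + k) s₂ (i := i + k) (by push_cast; ring)]
    exact ⟨by omega, hi.2⟩
  · intro x hx
    simp only [interPts, Finset.mem_filter, Finset.mem_Icc] at hx
    omega
  · intro i _
    simp
  · intro x hx
    simp only [interPts, Finset.mem_filter, Finset.mem_Icc] at hx
    rw [aht_of_add_eq m s₁ (i := (x + m).toNat) (by omega), ptOf]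
    congr 2
    omega

lemma interProd_eq_prod_contacts_map {F : Type*} [Field F] (f : ℤ × ℕ → F) (m k : ℕ)
    (s₁ : Fin (2 * m) → Bool) (s₂ : Fin L₂ → Bool) :
    interProd f m (m + k) s₁ s₂ =
      ∏ i ∈ (contacts k s₁ s₂).map (addRightEmbedding k), f (ptOf (-(m : ℤ) - k) s₂ i) := by
  rw [interProd_eq_prod_contacts, Finset.prod_map]
  refine Finset.prod_congr rfl fun i hi => ?_
  rw [ptOf, ptOf, addRightEmbedding_apply, ← (Finset.mem_filter.1 hi).2]
  push_cast
  ring_nf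

end Comparison

section Contacts

variable {L₁ L₂ k : ℕ} {P : Fin L₁ → Bool} {Q : Fin L₂ → Bool}

lemma ShiftLT.add_two_le (h : ShiftLT k P Q) (hk : Even k) (hL : L₁ + k ≤ L₂) {i : ℕ}
    (hi : i ≤ L₁) : pht P i + 2 ≤ pht Q (i + k) := by
  obtain ⟨r, rfl⟩ := hk
  have := h i hi
  have := pht_add_mod_two P hi
  have := pht_add_mod_two Q (i := i + (r + r)) (by omega)
  omega

lemma ShiftLE.stepVal_of_contact (h : ShiftLE k P Q) {i : ℕ} (hi : i < L₁) (hQ : i + k < L₂)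
    (hc : pht P i = pht Q (i + k)) : stepVal P i = -1 ∧ stepVal Q (i + k) = 1 := by
  have hle := h.1 (i + 1) hi
  have hns := h.2 i hi
  have := pht_succ P i
  have := pht_succ Q (i + k)
  rw [show i + 1 + k = i + k + 1 by ring] at hle hns
  rcases stepVal_eq_one_or_neg_one P hi with h1 | h1 <;>
    rcases stepVal_eq_one_or_neg_one Q hQ with h2 | h2 <;> omega

lemma ShiftLE.stepVal_of_contact_succ (h : ShiftLE k P Q) {i : ℕ} (hi : i < L₁)
    (hQ : i + k < L₂) (hc : pht P (i + 1) = pht Q (i + 1 + k)) :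
    stepVal P i = 1 ∧ stepVal Q (i + k) = -1 := by
  have hle := h.1 i hi.le
  have hns := h.2 i hi
  have := pht_succ P i
  have := pht_succ Q (i + k)
  rw [show i + 1 + k = i + k + 1 by ring] at hc hns
  rcases stepVal_eq_one_or_neg_one P hi with h1 | h1 <;>
    rcases stepVal_eq_one_or_neg_one Q hQ with h2 | h2 <;> omega

lemma ShiftLE.contacts_map_subset_valleys (h : ShiftLE k P Q) (hP : pht P L₁ = 0)
    (hQ : ∀ i ≤ L₂, 0 ≤ pht Q i) (hk : 1 ≤ k) (hL : L₁ + k < L₂) :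
    (contacts k P Q).map (addRightEmbedding k) ⊆ valleys Q := by
  intro i hi
  simp only [contacts, Finset.mem_map, Finset.mem_filter, Finset.mem_range,
    addRightEmbedding_apply] at hi
  obtain ⟨j, ⟨hj, hc⟩, rfl⟩ := hi
  refine mem_valleys.2 ⟨by omega, ?_, ?_⟩
  · rcases j with _ | j
    · exact stepVal_pred_eq_neg_one_of_pht_eq_zero hQ (by omega) (by omega) (by simpa using hc.symm)
    · rw [show j + 1 + k - 1 = j + k by omega]
      exact (h.stepVal_of_contact_succ (by omega) (by omega) hc).2
  · rcases (Nat.lt_or_ge j L₁) with hj' | hj'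
    · exact (h.stepVal_of_contact hj' (by omega) hc).2
    · obtain rfl : j = L₁ := by omega
      exact stepVal_eq_one_of_pht_eq_zero hQ hL (by rw [← hc, hP])

lemma contacts_subset_highPeaks {L₀ : ℕ} {A : Fin L₀ → Bool} (hA : ∀ i ≤ L₀, 0 ≤ pht A i)
    (hP : IsDyck P) (hAP : ShiftLT 2 A P) (hPQ : ShiftLE 2 P Q) (hL₁ : L₁ = L₀ + 4)
    (hL₂ : L₁ + 2 ≤ L₂) : contacts 2 P Q ⊆ highPeaks P := by
  obtain ⟨hPpos, hPend⟩ := (isDyck_iff P).1 hP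
  have hhigh : ∀ j ≤ L₀, 2 ≤ pht P (j + 2) := fun j hj => by
    have := hA j hj
    have := hAP.add_two_le even_two (by omega) hj
    omega
  subst hL₁
  intro i hi
  simp only [contacts, Finset.mem_filter, Finset.mem_range] at hi
  obtain ⟨hi, hc⟩ := hi
  have hdown : i < L₀ + 4 → stepVal P i = -1 := fun h =>
    (hPQ.stepVal_of_contact h (by omega) hc).1
  have hup : 1 ≤ i → stepVal P (i - 1) = 1 := fun h => by
    obtain ⟨j, rfl⟩ : ∃ j, i = j + 1 := ⟨i - 1, by omega⟩
    exact (hPQ.stepVal_of_contact_succ (by omega) (by omega) hc).1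
  have hfar : 2 ≤ i ∧ i ≤ L₀ + 2 := by
    have e1 : pht P 1 = stepVal P 0 := by simpa using pht_succ P 0
    have e2 : pht P 2 = pht P 1 + stepVal P 1 := pht_succ P 1
    have e3 : pht P (L₀ + 3) = pht P (L₀ + 2) + stepVal P (L₀ + 2) := pht_succ P _
    have e4 : pht P (L₀ + 4) = pht P (L₀ + 3) + stepVal P (L₀ + 3) := pht_succ P _
    have := hPpos 1 (by omega)
    have := hPpos (L₀ + 3) (by omega)
    have : 2 ≤ pht P 2 := hhigh 0 (by omega)
    have : 2 ≤ pht P (L₀ + 2) := hhigh L₀ le_rfl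
    have := stepVal_eq_one_or_neg_one P (j := 0) (by omega)
    have := stepVal_eq_one_or_neg_one P (j := L₀ + 3) (by omega)
    by_contra
    rcases (show i = 0 ∨ i = 1 ∨ i = L₀ + 3 ∨ i = L₀ + 4 by omega) with rfl | rfl | rfl | rfl
    · have : stepVal P 0 = -1 := hdown (by omega)
      omega
    · have : stepVal P 1 = -1 := hdown (by omega)
      omega
    · have : stepVal P (L₀ + 2) = 1 := hup (by omega)
      omega
    · have : stepVal P (L₀ + 3) = 1 := hup (by omega)
      omega
  refine mem_highPeaks.2 ⟨mem_peaks.2 ⟨by omega, hup (by omega), hdown (by omega)⟩, ?_⟩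
  simpa [Nat.sub_add_cancel hfar.1] using hhigh (i - 2) (by omega)

end Contacts

section Corners

variable {L : ℕ}

def corners (b : Bool) (s : Fin L → Bool) : Finset ℕ :=
  (Finset.Icc 1 (L - 1)).filter fun i =>
    stepVal s (i - 1) = (if b then 1 else -1) ∧ stepVal s i = (if b then -1 else 1)

lemma corners_true (s : Fin L → Bool) : corners true s = peaks s := rfl

lemma corners_false (s : Fin L → Bool) : corners false s = valleys s := rfl

def setCorners (b : Bool) (s : Fin L → Bool) (W : Finset ℕ) : Fin L → Bool :=
  fun j => if (j : ℕ) + 1 ∈ W then b else if (j : ℕ) ∈ W then !b else s j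

variable {b : Bool} {s : Fin L → Bool} {W : Finset ℕ}

lemma mem_corners {i : ℕ} : i ∈ corners b s ↔ (1 ≤ i ∧ i ≤ L - 1) ∧
    stepVal s (i - 1) = (if b then 1 else -1) ∧ stepVal s i = (if b then -1 else 1) := by
  simp [corners]

lemma succ_notMem_of_subset_corners (hW : W ⊆ corners b s) {i : ℕ} (hi : i ∈ W) :
    i + 1 ∉ W := fun hi' => by
  have h := (mem_corners.1 (hW hi)).2.2
  have h' := (mem_corners.1 (hW hi')).2.1
  rw [Nat.add_sub_cancel] at h'
  cases b <;> simp_all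

lemma stepVal_setCorners (hW : W ⊆ corners (!b) s) (j : ℕ) :
    stepVal (setCorners b s W) j =
      if j + 1 ∈ W then (if b then 1 else -1)
      else if j ∈ W then (if b then -1 else 1) else stepVal s j := by
  by_cases hjL : j < L
  · rw [stepVal_of_lt _ hjL, setCorners]
    split_ifs <;> simp_all [stepVal_of_lt]
  · have hW' : ∀ i ∈ W, 1 ≤ i ∧ i ≤ L - 1 := fun i hi => (mem_corners.1 (hW hi)).1
    have h1 : j + 1 ∉ W := fun h => by have := hW' _ h; omega
    have h2 : j ∉ W := fun h => by have := hW' _ h; omega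
    simp [stepVal, hjL, h1, h2]

lemma pht_setCorners (hW : W ⊆ corners (!b) s) (t : ℕ) :
    pht (setCorners b s W) t = pht s t + if t ∈ W then (if b then 2 else -2) else 0 := by
  induction t with
  | zero =>
    have : 0 ∉ W := fun h => by have := (mem_corners.1 (hW h)).1; omega
    simp [this]
  | succ t ih =>
    rw [pht_succ, pht_succ, ih, stepVal_setCorners hW]
    by_cases h1 : t + 1 ∈ W
    · have h2 : t ∉ W := fun h => succ_notMem_of_subset_corners hW h h1
      have h3 := (mem_corners.1 (hW h1)).2.1
      rw [Nat.add_sub_cancel] at h3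
      cases b <;> simp_all <;> ring
    · by_cases h2 : t ∈ W
      · have h3 := (mem_corners.1 (hW h2)).2.2
        cases b <;> simp_all <;> ring
      · simp [h1, h2]

lemma subset_corners_setCorners (hW : W ⊆ corners (!b) s) : W ⊆ corners b (setCorners b s W) := by
  intro i hi
  obtain ⟨hi', -⟩ := mem_corners.1 (hW hi)
  refine mem_corners.2 ⟨hi', ?_, ?_⟩
  · rw [stepVal_setCorners hW, Nat.sub_add_cancel hi'.1, if_pos hi]
  · rw [stepVal_setCorners hW, if_neg (succ_notMem_of_subset_corners hW hi), if_pos hi]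

lemma setCorners_setCorners (hW : W ⊆ corners (!b) s) :
    setCorners (!b) (setCorners b s W) W = s := by
  funext j
  have hj := stepVal_of_lt s j.isLt
  by_cases h1 : (j : ℕ) + 1 ∈ W
  · have h3 := (mem_corners.1 (hW h1)).2.1
    rw [Nat.add_sub_cancel, hj] at h3
    simp only [setCorners, h1, if_true]
    cases b <;> cases hs : s j <;> simp_all
  · by_cases h2 : (j : ℕ) ∈ W
    · have h3 := (mem_corners.1 (hW h2)).2.2
      rw [hj] at h3
      simp only [setCorners, h1, h2, if_true, if_false, Bool.not_not]
      cases b <;> cases hs : s j <;> simp_all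
    · simp [setCorners, h1, h2]

end Corners

section Raise

variable {L₁ L₂ L k : ℕ} {P : Fin L₁ → Bool} {Q : Fin L₂ → Bool} {W : Finset ℕ}
  {s s' : Fin L → Bool}

def RaisedAt (W : Finset ℕ) (s s' : Fin L → Bool) : Prop :=
  ∀ t, pht s' t = pht s t + if t ∈ W then 2 else 0

lemma raisedAt_setCorners_true (hW : W ⊆ valleys s) : RaisedAt W s (setCorners true s W) :=
  fun t => by
    simpa using pht_setCorners (b := true) (W := W) (by rwa [Bool.not_true, corners_false]) t

lemma raisedAt_setCorners_false (hW : W ⊆ peaks s) : RaisedAt W (setCorners false s W) s :=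
  fun t => by
    have h := pht_setCorners (b := false) (W := W) (by rwa [Bool.not_false, corners_true]) t
    simp only [Bool.false_eq_true, if_false] at h
    rw [h]
    split_ifs <;> ring

lemma RaisedAt.isDyck (hr : RaisedAt W s s') (hs : IsDyck s) (hL : L ∉ W) : IsDyck s' := by
  rw [isDyck_iff] at hs ⊢
  refine ⟨fun i hi => ?_, ?_⟩
  · have := hs.1 i hi
    rw [hr]
    split_ifs <;> omega
  · rw [hr, if_neg hL, hs.2, add_zero]

lemma RaisedAt.isDyck_of_raised (hr : RaisedAt W s' s) (hs : IsDyck s) (hW : ∀ i ∈ W, 2 ≤ pht s i)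
    (hL : L ∉ W) : IsDyck s' := by
  rw [isDyck_iff] at hs ⊢
  refine ⟨fun i hi => ?_, ?_⟩
  · have := hs.1 i hi
    have hri := hr i
    by_cases h : i ∈ W
    · have := hW i h
      simp only [h, if_true] at hri
      omega
    · simp only [h, if_false] at hri
      omega
  · have := hr L
    rw [if_neg hL, hs.2] at this
    omega

lemma RaisedAt.shiftLT_of_shiftLE (hr : RaisedAt W s s') (h : ShiftLE k P s)
    (hc : (contacts k P s).map (addRightEmbedding k) ⊆ W) : ShiftLT k P s' := by
  intro i hi
  have hle := h.1 i hi
  rw [hr]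
  by_cases hw : i + k ∈ W
  · rw [if_pos hw]
    omega
  · rw [if_neg hw, add_zero]
    refine lt_of_le_of_ne hle fun heq => hw (hc ?_)
    simp only [contacts, Finset.mem_map, Finset.mem_filter, Finset.mem_range,
      addRightEmbedding_apply]
    exact ⟨i, ⟨by omega, heq⟩, rfl⟩

lemma RaisedAt.shiftLE_of_shiftLT (hr : RaisedAt W s s') (h : ShiftLT k s Q) (hk : Even k)
    (hL : L + k ≤ L₂) (hW : ∀ i ∈ W, i + 1 ∉ W) : ShiftLE k s' Q := by
  refine ⟨fun i hi => ?_, fun i hi ⟨h1, h2⟩ => ?_⟩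
  · have := h.add_two_le hk hL hi
    have := h i hi
    rw [hr]
    split_ifs <;> omega
  · have := h i hi.le
    have := h (i + 1) hi
    rw [hr] at h1 h2
    by_cases hw : i ∈ W
    · rw [if_neg (hW i hw)] at h2
      omega
    · rw [if_neg hw] at h1
      omega

lemma RaisedAt.contacts_subset_of_shiftLT (hr : RaisedAt W s s') (h : ShiftLT k s Q) :
    contacts k s' Q ⊆ W := by
  intro i hi
  simp only [contacts, Finset.mem_filter, Finset.mem_range] at hi
  by_contra hw
  have := h i (by omega)
  rw [hr, if_neg hw] at hi
  omega

lemma RaisedAt.shiftLE_of_shiftLT_raised (hr : RaisedAt W s' s) (h : ShiftLT k P s)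
    (hk : Even k) (hL : L₁ + k ≤ L) (hW : ∀ i ∈ W, i + 1 ∉ W) : ShiftLE k P s' := by
  refine ⟨fun i hi => ?_, fun i hi ⟨h1, h2⟩ => ?_⟩
  · have := h.add_two_le hk hL hi
    have := h i hi
    have := hr (i + k)
    split_ifs at this <;> omega
  · have := h i hi.le
    have := h (i + 1) hi
    have e1 := hr (i + k)
    have e2 := hr (i + 1 + k)
    by_cases hw : i + k ∈ W
    · rw [if_neg (by rw [show i + 1 + k = i + k + 1 by ring]; exact hW _ hw)] at e2
      omega
    · rw [if_neg hw] at e1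
      omega

lemma RaisedAt.shiftLT_of_shiftLE_raised (hr : RaisedAt W s' s) (h : ShiftLE k s Q)
    (hc : contacts k s Q ⊆ W) : ShiftLT k s' Q := by
  intro i hi
  have := h.1 i hi
  have e := hr i
  by_cases hw : i ∈ W
  · rw [if_pos hw] at e
    omega
  · rw [if_neg hw] at e
    have : pht s i ≠ pht Q (i + k) := fun heq =>
      hw (hc (Finset.mem_filter.2 ⟨Finset.mem_range.2 (by omega), heq⟩))
    omega

lemma RaisedAt.contacts_map_subset_of_shiftLT_raised (hr : RaisedAt W s' s)
    (h : ShiftLT k P s) : (contacts k P s').map (addRightEmbedding k) ⊆ W := by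
  intro i hi
  simp only [contacts, Finset.mem_map, Finset.mem_filter, Finset.mem_range,
    addRightEmbedding_apply] at hi
  obtain ⟨j, ⟨hj, hc⟩, rfl⟩ := hi
  by_contra hw
  have := h j (by omega)
  have e := hr (j + k)
  rw [if_neg hw] at e
  omega

end Raise

section Weights

variable {F : Type*} [Field F]

lemma prod_mul_prod_mul_prod_eq_sum_Icc {ι : Type*} [DecidableEq ι] {R V C : Finset ι}
    (P Q : ι → F) (c : F) (hCV : C ⊆ V) (hVR : V ⊆ R) (hPQ : ∀ i ∈ V, P i * (Q i - 1) = c)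
    (hQ : ∀ i ∈ V, Q i ≠ 0) :
    (∏ i ∈ R, P i) * (∏ i ∈ V, Q i) * ∏ i ∈ C, (1 - (Q i)⁻¹) =
      ∑ W ∈ Finset.Icc C V, c ^ W.card * ∏ i ∈ R \ W, P i := by
  -- a point of `R` contributes `P = 0 + P`, `P Q = c + P` or `P Q (1 - Q⁻¹) = c + 0`
  -- according as it lies outside `V`, in `V \ C` or in `C`
  have hsplit : (∏ i ∈ R, P i) * (∏ i ∈ V, Q i) * ∏ i ∈ C, (1 - (Q i)⁻¹) =
      ∏ i ∈ R, ((if i ∈ V then c else 0) + if i ∈ C then 0 else P i) := by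
    have hVprod : ∏ i ∈ V, Q i = ∏ i ∈ R, if i ∈ V then Q i else 1 := by
      rw [Finset.prod_ite_mem, Finset.inter_eq_right.2 hVR]
    have hCprod : ∏ i ∈ C, (1 - (Q i)⁻¹) = ∏ i ∈ R, if i ∈ C then 1 - (Q i)⁻¹ else 1 := by
      rw [Finset.prod_ite_mem, Finset.inter_eq_right.2 (hCV.trans hVR)]
    rw [hVprod, hCprod, ← Finset.prod_mul_distrib, ← Finset.prod_mul_distrib]
    refine Finset.prod_congr rfl fun i _ => ?_
    by_cases hV : i ∈ V
    · by_cases hC : i ∈ C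
      · simp only [hV, hC, if_true, add_zero]
        rw [← hPQ i hV]
        field_simp [hQ i hV]
      · simp only [hV, hC, if_true, if_false, mul_one]
        linear_combination hPQ i hV
    · have hC : i ∉ C := fun h => hV (hCV h)
      simp [hV, hC]
  rw [hsplit, Finset.prod_add]
  symm
  refine Finset.sum_subset_zero_on_sdiff (fun W hW => ?_) (fun W hW => ?_) (fun W hW => ?_)
  · rw [Finset.mem_Icc] at hW
    exact Finset.mem_powerset.2 (hW.2.trans hVR)
  · obtain ⟨hWR, hW⟩ := Finset.mem_sdiff.1 hW
    rw [Finset.mem_Icc, not_and_or] at hW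
    rcases hW with hCW | hWV
    · obtain ⟨i, hiC, hiW⟩ := Finset.not_subset.1 hCW
      refine mul_eq_zero_of_right _ (Finset.prod_eq_zero (i := i) ?_ (by simp [hiC]))
      exact Finset.mem_sdiff.2 ⟨hCV.trans hVR hiC, hiW⟩
    · obtain ⟨i, hiW, hiV⟩ := Finset.not_subset.1 hWV
      exact mul_eq_zero_of_left (Finset.prod_eq_zero hiW (by simp [hiV])) _
  · rw [Finset.mem_Icc] at hW
    rw [Finset.prod_congr rfl fun i hi => if_pos (hW.2 hi), Finset.prod_const]
    congr 1
    refine Finset.prod_congr rfl fun i hi => ?_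
    rw [if_neg fun hiC => (Finset.mem_sdiff.1 hi).2 (hW.1 hiC)]

variable {L : ℕ}

/-- The weight of the Schröder path obtained from `s` by replacing the corners at the points
of `W` by horizontal steps. -/
def markedWeight (wt : ℤ × ℕ → F) (c : F) (a : ℤ) (s : Fin L → Bool) (W : Finset ℕ) : F :=
  c ^ W.card * ∏ i ∈ Finset.range (L + 1) \ W, wt (ptOf a s i)

lemma markedWeight_congr (wt : ℤ × ℕ → F) (c : F) (a : ℤ) {s s' : Fin L → Bool}
    {W : Finset ℕ} (hr : RaisedAt W s s') : markedWeight wt c a s' W = markedWeight wt c a s W := by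
  refine congrArg _ (Finset.prod_congr rfl fun i hi => ?_)
  rw [ptOf, ptOf, hr, if_neg (Finset.mem_sdiff.1 hi).2, add_zero]

variable (wt wte : ℤ × ℕ → F) (c : F) (hc : ∀ p, wt p * (wte p - 1) = c) (hwte : ∀ p, wte p ≠ 0)
include hc hwte

lemma wtVal_mul_prod_eq_sum (a : ℤ) (s : Fin L → Bool) {C : Finset ℕ} (hC : C ⊆ valleys s) :
    wtVal wt wte a s * ∏ i ∈ C, (1 - (wte (ptOf a s i))⁻¹) =
      ∑ W ∈ Finset.Icc C (valleys s), markedWeight wt c a s W :=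
  prod_mul_prod_mul_prod_eq_sum_Icc _ _ c hC
    (fun i hi => by have := (mem_valleys.1 hi).1; simp; omega)
    (fun _ _ => hc _) (fun _ _ => hwte _)

lemma wtHigh_mul_prod_eq_sum (a : ℤ) (s : Fin L → Bool) {C : Finset ℕ} (hC : C ⊆ highPeaks s) :
    wtHigh wt wte a s * ∏ i ∈ C, (1 - (wte (ptOf a s i))⁻¹) =
      ∑ W ∈ Finset.Icc C (highPeaks s), markedWeight wt c a s W :=
  prod_mul_prod_mul_prod_eq_sum_Icc _ _ c hC
    (fun i hi => by have := (mem_peaks.1 (mem_highPeaks.1 hi).1).1; simp; omega)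
    (fun _ _ => hc _) (fun _ _ => hwte _)

end Weights

section Expansion

variable {F : Type*} [Field F] (wt wte : ℤ × ℕ → F) (c : F)
  (hc : ∀ p, wt p * (wte p - 1) = c) (hwte : ∀ p, wte p ≠ 0)
  {n : ℕ} {A : Fin (2 * n) → Bool} {B : Fin (2 * (n + 4)) → Bool} {s : Fin (2 * (n + 2)) → Bool}
include hc hwte

lemma wtVal_mul_interProd_eq_sum (hA : IsDyck A) (hs : IsDyck s) (hAs : PathLE n (n + 2) A s) :
    wtVal wt wte (-(n : ℤ) - 2) s * interProd (fun p => 1 - (wte p)⁻¹) n (n + 2) A s =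
      ∑ W ∈ Finset.Icc ((contacts 2 A s).map (addRightEmbedding 2)) (valleys s),
        markedWeight wt c (-(n : ℤ) - 2) s W := by
  rw [interProd_eq_prod_contacts_map]
  push_cast
  exact wtVal_mul_prod_eq_sum wt wte c hc hwte _ s
    (((pathLE_iff_shiftLE n 2 A s).1 hAs).contacts_map_subset_valleys ((isDyck_iff A).1 hA).2
      ((isDyck_iff s).1 hs).1 (by norm_num) (by omega))

lemma wtHigh_mul_interProd_eq_sum (hA : IsDyck A) (hs : IsDyck s) (hAs : PathLT n (n + 2) A s)
    (hsB : PathLE (n + 2) (n + 4) s B) :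
    wtHigh wt wte (-(n : ℤ) - 2) s * interProd (fun p => 1 - (wte p)⁻¹) (n + 2) (n + 4) s B =
      ∑ W ∈ Finset.Icc (contacts 2 s B) (highPeaks s), markedWeight wt c (-(n : ℤ) - 2) s W := by
  rw [interProd_eq_prod_contacts _ (n + 2) 2]
  rw [show -((n + 2 : ℕ) : ℤ) = -(n : ℤ) - 2 by push_cast; ring]
  exact wtHigh_mul_prod_eq_sum wt wte c hc hwte _ s
    (contacts_subset_highPeaks ((isDyck_iff A).1 hA).1 hs ((pathLT_iff_shiftLT n 2 A s).1 hAs)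
      ((pathLE_iff_shiftLE (n + 2) 2 s B).1 hsB) (by ring) (by omega))

end Expansion

section Bijection

variable {n : ℕ} {A : Fin (2 * n) → Bool} {B : Fin (2 * (n + 4)) → Bool}
  {s : Fin (2 * (n + 2)) → Bool} {W : Finset ℕ}

lemma setCorners_true_mem (hs : IsDyck s ∧ PathLE n (n + 2) A s ∧ PathLT (n + 2) (n + 4) s B)
    (hW : W ∈ Finset.Icc ((contacts 2 A s).map (addRightEmbedding 2)) (valleys s)) :
    (IsDyck (setCorners true s W) ∧ PathLT n (n + 2) A (setCorners true s W) ∧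
      PathLE (n + 2) (n + 4) (setCorners true s W) B) ∧
      W ∈ Finset.Icc (contacts 2 (setCorners true s W) B) (highPeaks (setCorners true s W)) := by
  obtain ⟨hs, hAs, hsB⟩ := hs
  have hAs := (pathLE_iff_shiftLE n 2 A s).1 hAs
  have hsB := (pathLT_iff_shiftLT (n + 2) 2 s B).1 hsB
  rw [Finset.mem_Icc] at hW ⊢
  have hr := raisedAt_setCorners_true hW.2
  have hWc : W ⊆ corners false s := by rw [corners_false]; exact hW.2
  have hWL : 2 * (n + 2) ∉ W := fun h => by have := (mem_valleys.1 (hW.2 h)).1; omega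
  refine ⟨⟨hr.isDyck hs hWL, (pathLT_iff_shiftLT n 2 A _).2 (hr.shiftLT_of_shiftLE hAs hW.1),
    (pathLE_iff_shiftLE (n + 2) 2 _ B).2 (hr.shiftLE_of_shiftLT hsB even_two (by omega)
      fun i hi => succ_notMem_of_subset_corners hWc hi)⟩,
    hr.contacts_subset_of_shiftLT hsB, fun i hi => mem_highPeaks.2
      ⟨by rw [← corners_true]; exact subset_corners_setCorners hWc hi, ?_⟩⟩
  have := ((isDyck_iff s).1 hs).1 i (by have := (mem_valleys.1 (hW.2 hi)).1; omega)
  rw [hr, if_pos hi]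
  omega

lemma setCorners_false_mem (hs : IsDyck s ∧ PathLT n (n + 2) A s ∧ PathLE (n + 2) (n + 4) s B)
    (hW : W ∈ Finset.Icc (contacts 2 s B) (highPeaks s)) :
    (IsDyck (setCorners false s W) ∧ PathLE n (n + 2) A (setCorners false s W) ∧
      PathLT (n + 2) (n + 4) (setCorners false s W) B) ∧
      W ∈ Finset.Icc ((contacts 2 A (setCorners false s W)).map (addRightEmbedding 2))
        (valleys (setCorners false s W)) := by
  obtain ⟨hs, hAs, hsB⟩ := hs
  have hAs := (pathLT_iff_shiftLT n 2 A s).1 hAs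
  have hsB := (pathLE_iff_shiftLE (n + 2) 2 s B).1 hsB
  rw [Finset.mem_Icc] at hW ⊢
  have hWp : W ⊆ peaks s := hW.2.trans (Finset.filter_subset _ _)
  have hr := raisedAt_setCorners_false hWp
  have hWc : W ⊆ corners true s := by rwa [corners_true]
  have hWL : 2 * (n + 2) ∉ W := fun h => by have := (mem_peaks.1 (hWp h)).1; omega
  exact ⟨⟨hr.isDyck_of_raised hs (fun i hi => (mem_highPeaks.1 (hW.2 hi)).2) hWL,
    (pathLE_iff_shiftLE n 2 A _).2 (hr.shiftLE_of_shiftLT_raised hAs even_two (by omega)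
      fun i hi => succ_notMem_of_subset_corners hWc hi),
    (pathLT_iff_shiftLT (n + 2) 2 _ B).2 (hr.shiftLT_of_shiftLE_raised hsB hW.1)⟩,
    hr.contacts_map_subset_of_shiftLT_raised hAs,
    by rw [← corners_false]; exact subset_corners_setCorners hWc⟩

end Bijection

theorem statement_12_general {F : Type*} [Field F] (wt wte : ℤ × ℕ → F) (c : F)
    (h1 : ∀ p, wt p * (wte p - 1) = c) (h2 : ∀ p, wte p ≠ 0)
    (n : ℕ) (A : Fin (2 * n) → Bool) (B : Fin (2 * (n + 4)) → Bool)
    (hA : IsDyck A) :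
    (∑ s ∈ (Finset.univ.filter fun s : Fin (2 * (n + 2)) → Bool =>
        IsDyck s ∧ PathLE n (n + 2) A s ∧ PathLT (n + 2) (n + 4) s B),
        wtVal wt wte (-(n : ℤ) - 2) s *
          interProd (fun p => 1 - (wte p)⁻¹) n (n + 2) A s) =
      ∑ s ∈ (Finset.univ.filter fun s : Fin (2 * (n + 2)) → Bool =>
        IsDyck s ∧ PathLT n (n + 2) A s ∧ PathLE (n + 2) (n + 4) s B),
        wtHigh wt wte (-(n : ℤ) - 2) s *
          interProd (fun p => 1 - (wte p)⁻¹) (n + 2) (n + 4) s B := by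
  rw [Finset.sum_congr rfl fun s hs => wtVal_mul_interProd_eq_sum wt wte c h1 h2 hA
      (Finset.mem_filter.1 hs).2.1 (Finset.mem_filter.1 hs).2.2.1,
    Finset.sum_congr rfl fun s hs => wtHigh_mul_interProd_eq_sum wt wte c h1 h2 hA
      (Finset.mem_filter.1 hs).2.1 (Finset.mem_filter.1 hs).2.2.1 (Finset.mem_filter.1 hs).2.2.2,
    Finset.sum_sigma', Finset.sum_sigma']
  refine Finset.sum_nbij' (fun x => ⟨setCorners true x.1 x.2, x.2⟩)
    (fun x => ⟨setCorners false x.1 x.2, x.2⟩) ?_ ?_ ?_ ?_ ?_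
  all_goals simp only [Finset.mem_sigma, Finset.mem_filter, Finset.mem_univ, true_and]
  · rintro ⟨s, W⟩ ⟨hs, hW⟩
    exact setCorners_true_mem hs hW
  · rintro ⟨s, W⟩ ⟨hs, hW⟩
    exact setCorners_false_mem hs hW
  · rintro ⟨s, W⟩ ⟨-, hW⟩
    have e : setCorners false (setCorners true s W) W = s :=
      setCorners_setCorners (Finset.mem_Icc.1 hW).2
    rw [e]
  · rintro ⟨s, W⟩ ⟨-, hW⟩
    have e : setCorners true (setCorners false s W) W = s :=
      setCorners_setCorners ((Finset.mem_Icc.1 hW).2.trans (Finset.filter_subset _ _))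
    rw [e]
  · rintro ⟨s, W⟩ ⟨-, hW⟩
    exact (markedWeight_congr wt c _ (raisedAt_setCorners_true (Finset.mem_Icc.1 hW).2)).symm

theorem statement_12 {F : Type*} [Field F] (wt wte : ℤ × ℕ → F) (c : F)
    (h1 : ∀ p, wt p * (wte p - 1) = c) (h2 : ∀ p, wte p ≠ 0)
    (n : ℕ) (A : Fin (2 * n) → Bool) (B : Fin (2 * (n + 4)) → Bool)
    (hA : IsDyck A) (hB : IsDyck B) (hAB : PathLT n (n + 4) A B) :
    (∑ s ∈ (Finset.univ.filter fun s : Fin (2 * (n + 2)) → Bool =>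
        IsDyck s ∧ PathLE n (n + 2) A s ∧ PathLT (n + 2) (n + 4) s B),
        wtVal wt wte (-(n : ℤ) - 2) s *
          interProd (fun p => 1 - (wte p)⁻¹) n (n + 2) A s) =
      ∑ s ∈ (Finset.univ.filter fun s : Fin (2 * (n + 2)) → Bool =>
        IsDyck s ∧ PathLT n (n + 2) A s ∧ PathLE (n + 2) (n + 4) s B),
        wtHigh wt wte (-(n : ℤ) - 2) s *
          interProd (fun p => 1 - (wte p)⁻¹) (n + 2) (n + 4) s B :=
  statement_12_general wt wte c h1 h2 n A B hA

end Paper
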